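/- Let 𝔽 be ℝ or ℂ, X a Banach space over 𝔽 with dim X ≥ 2, and 𝒜 a standard operator algebra in B(X). If S ∈ 𝒜 satisfies [A, S]₃ = 0 for all A ∈ 𝒜 and S is not a scalar multiple of I, then there exist scalars α, β ∈ 𝔽 such that S² = αI + βS and 4α + β² = 0. -/

import Mathlib

/-!
Testing `[A, S]₃ = 0` against the rank-one operators `A = f ⊗ x` gives, for all `f`, `x`, `u`,
`f(S³u) x - 3 f(S²u) Sx + 3 f(Su) S²x - f(u) S³x = 0`.
Since `S` is not scalar, some `u` has `u, Su` linearly independent, and Hahn–Banach provides `f`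
with `f u = 0`, `f (S u) = 1`. The identity then reads `3 S²x = 3β Sx + 3α x` with
`β = f(S²u)`, `3α = -f(S³u)`. Applying `f` to `S³u = S²(Su) = α Su + β S²u` gives
`-3α = α + β²`, i.e. `4α + β² = 0`.
-/

set_option synthInstance.maxHeartbeats 400000
set_option maxHeartbeats 1000000

/-- The commutator `[A,B] = AB - BA` in a ring. -/
def bracket1 {R : Type*} [Ring R] (A B : R) : R := A * B - B * A

/-- The 3-commutator `[A,B]₃ = [[[A,B],B],B]` in a ring. -/
def bracket3 {R : Type*} [Ring R] (A B : R) : R := bracket1 (bracket1 (bracket1 A B) B) B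

/-- A standard operator algebra on a normed space `X` over `𝕜` is a subalgebra of
`B(X)` (automatically containing the identity) containing all finite-rank operators. -/
def IsStandardOperatorAlgebra (𝕜 : Type*) [RCLike 𝕜] (X : Type*)
    [NormedAddCommGroup X] [NormedSpace 𝕜 X]
    (𝒜 : Subalgebra 𝕜 (X →L[𝕜] X)) : Prop :=
  ∀ T : X →L[𝕜] X, FiniteDimensional 𝕜 (LinearMap.range (T : X →ₗ[𝕜] X)) → T ∈ 𝒜

theorem map_bracket3 {R R' F : Type*} [Ring R] [Ring R'] [FunLike F R R'] [RingHomClass F R R']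
    (φ : F) (a b : R) : φ (bracket3 a b) = bracket3 (φ a) (φ b) := by
  simp only [bracket3, bracket1, map_sub, map_mul]

theorem bracket3_smulRight_apply {R M : Type*} [CommRing R] [TopologicalSpace R]
    [IsTopologicalRing R] [AddCommGroup M] [TopologicalSpace M] [Module R M] [ContinuousSMul R M]
    [IsTopologicalAddGroup M] (f : M →L[R] R) (x : M) (T : M →L[R] M) (u : M) :
    bracket3 (f.smulRight x) T u = f (T (T (T u))) • x - (3 * f (T (T u))) • T x
      + (3 * f (T u)) • T (T x) - f u • T (T (T x)) := by
  simp only [bracket3, bracket1, sub_apply, mul_apply_eq_comp,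
    ContinuousLinearMap.smulRight_apply, map_sub, map_smul]
  module

theorem IsStandardOperatorAlgebra.smulRight_mem {𝕜 X : Type*} [RCLike 𝕜] [NormedAddCommGroup X]
    [NormedSpace 𝕜 X] {𝒜 : Subalgebra 𝕜 (X →L[𝕜] X)} (h𝒜 : IsStandardOperatorAlgebra 𝕜 X 𝒜)
    (f : X →L[𝕜] 𝕜) (x : X) : f.smulRight x ∈ 𝒜 := by
  refine h𝒜 _ (Submodule.finiteDimensional_of_le (S₂ := 𝕜 ∙ x) ?_)
  rintro _ ⟨u, rfl⟩
  exact Submodule.smul_mem _ _ (Submodule.mem_span_singleton_self x)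

theorem ContinuousLinearMap.exists_linearIndependent_apply_of_ne_smul_one {K M : Type*} [Field K]
    [TopologicalSpace K] [AddCommGroup M] [TopologicalSpace M] [Module K M]
    [ContinuousConstSMul K M] (T : M →L[K] M) (hT : ∀ a : K, T ≠ a • 1) :
    ∃ v, LinearIndependent K ![v, T v] := by
  by_contra! h
  obtain ⟨a, ha⟩ := LinearMap.exists_eq_smul_id_of_forall_notLinearIndependent h
  exact hT a (ContinuousLinearMap.coe_injective ha)

theorem SeparatingDual.exists_eq_zero_eq_one_of_linearIndependent {R V : Type*} [Field R]
    [TopologicalSpace R] [IsTopologicalRing R] [AddCommGroup V] [TopologicalSpace V] [Module R V]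
    [SeparatingDual R V] {x y : V} (h : LinearIndependent R ![x, y]) :
    ∃ f : StrongDual R V, f x = 0 ∧ f y = 1 := by
  have hx : x ≠ 0 := h.ne_zero 0
  obtain ⟨g, hgx⟩ := SeparatingDual.exists_eq_one (R := R) hx
  have hw : y - g y • x ≠ 0 := by
    rw [sub_ne_zero]
    exact ((LinearIndependent.pair_iff' hx).mp h (g y)).symm
  obtain ⟨k, hkw⟩ := SeparatingDual.exists_eq_one (R := R) hw
  refine ⟨k - k x • g, ?_, ?_⟩
  · simp [hgx]
  · simpa [mul_comm] using hkw

theorem LinearMap.exists_sq_eq_of_rankOne_bracket3_eq_zero {K M : Type*} [Field K]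
    [AddCommGroup M] [Module K M] (h3 : (3 : K) ≠ 0) (T : M →ₗ[K] M) (φ : M →ₗ[K] K) (u : M)
    (hφu : φ u = 0) (hφTu : φ (T u) = 1)
    (hT : ∀ x, φ (T (T (T u))) • x - (3 * φ (T (T u))) • T x
      + (3 * φ (T u)) • T (T x) - φ u • T (T (T x)) = 0) :
    ∃ α β : K, (∀ x, T (T x) = α • x + β • T x) ∧ 4 * α + β ^ 2 = 0 := by
  set β := φ (T (T u))
  obtain ⟨α, hα⟩ : ∃ α : K, 3 * α = -φ (T (T (T u))) := ⟨_, mul_div_cancel₀ _ h3⟩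
  have hquad : ∀ x, T (T x) = α • x + β • T x := by
    intro x
    have hx := hT x
    rw [hφu, hφTu, mul_one, zero_smul, sub_zero] at hx
    apply smul_right_injective M h3
    simp only [smul_add, smul_smul, hα]
    linear_combination (norm := module) hx
  refine ⟨α, β, hquad, ?_⟩
  have hφT3u : φ (T (T (T u))) = α + β * β := by
    rw [hquad (T u), map_add, map_smul, map_smul, hφTu, smul_eq_mul, smul_eq_mul, mul_one]
  linear_combination hα - hφT3u

theorem stmt_7_general {𝕜 X : Type*} [RCLike 𝕜] [NormedAddCommGroup X] [NormedSpace 𝕜 X]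
    (𝒜 : Subalgebra 𝕜 (X →L[𝕜] X)) (h𝒜 : IsStandardOperatorAlgebra 𝕜 X 𝒜)
    (S : 𝒜) (h : ∀ A : 𝒜, bracket3 A S = 0)
    (hns : ∀ l : 𝕜, S ≠ l • (1 : 𝒜)) :
    ∃ α β : 𝕜, S * S = α • (1 : 𝒜) + β • S ∧ 4 * α + β ^ 2 = 0 := by
  obtain ⟨u, hu⟩ := (S : X →L[𝕜] X).exists_linearIndependent_apply_of_ne_smul_one
    fun l hl => hns l (Subtype.ext (by simpa using hl))
  obtain ⟨f, hfu, hfSu⟩ := SeparatingDual.exists_eq_zero_eq_one_of_linearIndependent hu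
  have hrankOne (x : X) : bracket3 (f.smulRight x) (S : X →L[𝕜] X) = 0 := by
    simpa [map_bracket3] using congrArg 𝒜.val (h ⟨_, h𝒜.smulRight_mem f x⟩)
  obtain ⟨α, β, hquad, hdisc⟩ := LinearMap.exists_sq_eq_of_rankOne_bracket3_eq_zero three_ne_zero
    (S : X →L[𝕜] X).toLinearMap f.toLinearMap u hfu hfSu fun x => by
      simpa [bracket3_smulRight_apply] using congrArg (· u) (hrankOne x)
  exact ⟨α, β, Subtype.ext (ContinuousLinearMap.ext fun x => by simpa using hquad x), hdisc⟩

theorem stmt_7 {𝕜 X : Type*} [RCLike 𝕜] [NormedAddCommGroup X] [NormedSpace 𝕜 X]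
    [CompleteSpace X] (hdim : 2 ≤ Module.rank 𝕜 X)
    (𝒜 : Subalgebra 𝕜 (X →L[𝕜] X)) (h𝒜 : IsStandardOperatorAlgebra 𝕜 X 𝒜)
    (S : 𝒜) (h : ∀ A : 𝒜, bracket3 A S = 0)
    (hns : ∀ l : 𝕜, S ≠ l • (1 : 𝒜)) :
    ∃ α β : 𝕜, S * S = α • (1 : 𝒜) + β • S ∧ 4 * α + β ^ 2 = 0 :=
  stmt_7_general 𝒜 h𝒜 S h hns
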